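/- arXiv:math/0507198 — 3 statements merged into one kernel-verified Lean document; each statement's English description precedes it below -/
import Mathlib

section
/- Let g be a finite-dimensional complex Lie superalgebra with an even, invariant, non-degenerate supersymmetric bilinear form (·,·), and let x ∈ g₁ satisfy [x,x] = 0. Then the superdimension of [x, g] = {[x,y] : y ∈ g} is zero, i.e. dim [x,g]₀ = dim [x,g]₁. -/
/-!
Invariance of the form makes `z ↦ [x,z] : g₁ → g₀` and `a ↦ [a,x] : g₀ → g₁` adjoint to each
other, and adjoint maps between spaces with non-degenerate forms have the same rank.
-/

open Module LinearMap

theorem LinearMap.IsAdjointPair.finrank_range_eq {K V W : Type*} [Field K]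
    [AddCommGroup V] [Module K V] [AddCommGroup W] [Module K W] [FiniteDimensional K V]
    {B : LinearMap.BilinForm K V} {C : LinearMap.BilinForm K W}
    (hB : B.Nondegenerate) (hC : C.SeparatingLeft)
    {g : V →ₗ[K] W} {f : W →ₗ[K] V} (h : IsAdjointPair B C g f) :
    finrank K (range f) = finrank K (range g) := by
  have hcomp : C ∘ₗ g = f.dualMap ∘ₗ (B.toDual hB : V →ₗ[K] Dual K V) :=
    (isAdjointPair_iff_comp_eq_compl₂.mp h).trans (by ext; rfl)
  have hC_inj : Function.Injective C := ker_eq_bot.mp (separatingLeft_iff_ker_eq_bot.mp hC)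
  calc finrank K (range f) = finrank K (range f.dualMap) :=
        (finrank_range_dualMap_eq_finrank_range f).symm
    _ = finrank K (range (C ∘ₗ g)) := by
        rw [hcomp, range_comp_of_range_eq_top _ (B.toDual hB).range]
    _ = finrank K (range g) := by
        rw [range_comp]
        exact (Submodule.equivMapOfInjective C hC_inj _).finrank_eq.symm

theorem sdim_bracket_with_x_eq_zero_general
    (g0 g1 : Type*) [AddCommGroup g0] [Module ℂ g0] [AddCommGroup g1] [Module ℂ g1]
    [FiniteDimensional ℂ g0]
    (b11 : g1 →ₗ[ℂ] g1 →ₗ[ℂ] g0)    -- the bracket g1 × g1 → g0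
    (b01 : g0 →ₗ[ℂ] g1 →ₗ[ℂ] g1)    -- the bracket g0 × g1 → g1
    (B0 : LinearMap.BilinForm ℂ g0) (B1 : LinearMap.BilinForm ℂ g1)
    (hB0 : B0.Nondegenerate) (hB1 : B1.Nondegenerate)
    (hinv2 : ∀ (a : g0) (y z : g1), B1 (b01 a y) z = B0 a (b11 y z))
    (x : g1) :
    Module.finrank ℂ (LinearMap.range (b11 x)) =
      Module.finrank ℂ (LinearMap.range (b01.flip x)) :=
  IsAdjointPair.finrank_range_eq hB0 hB1.1 fun a z => hinv2 a x z

/-- Let `g = g0 ⊕ g1` be a finite-dimensional complex Lie superalgebra with an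
even, invariant, non-degenerate supersymmetric bilinear form (given componentwise by a
symmetric non-degenerate form `B0` on `g0` and a skew-symmetric non-degenerate form `B1`
on `g1`), brackets `b11 : g1 × g1 → g0` (symmetric) and `b01 : g0 × g1 → g1`, and
invariance `([y,z],a) = (y,[z,a])`. If `x ∈ g1` satisfies `[x,x] = 0`, then
`sdim [x,g] = 0`, i.e. `dim [x,g]₀ = dim [x,g]₁`, where `[x,g]₀ = [x,g1] = range (b11 x)`
and `[x,g]₁ = [x,g0] = range (a ↦ [a,x])`. -/
theorem sdim_bracket_with_x_eq_zero
    (g0 g1 : Type*) [AddCommGroup g0] [Module ℂ g0] [AddCommGroup g1] [Module ℂ g1]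
    [FiniteDimensional ℂ g0] [FiniteDimensional ℂ g1]
    (b11 : g1 →ₗ[ℂ] g1 →ₗ[ℂ] g0)    -- the bracket g1 × g1 → g0
    (b01 : g0 →ₗ[ℂ] g1 →ₗ[ℂ] g1)    -- the bracket g0 × g1 → g1
    (B0 : LinearMap.BilinForm ℂ g0) (B1 : LinearMap.BilinForm ℂ g1)
    (hB0symm : ∀ a b : g0, B0 a b = B0 b a)
    (hB1skew : ∀ y z : g1, B1 y z = - B1 z y)
    (hB0 : B0.Nondegenerate) (hB1 : B1.Nondegenerate)
    (hb11symm : ∀ y z : g1, b11 y z = b11 z y)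
    (hinv1 : ∀ (y z : g1) (a : g0), B0 (b11 y z) a = - B1 y (b01 a z))
    (hinv2 : ∀ (a : g0) (y z : g1), B1 (b01 a y) z = B0 a (b11 y z))
    (x : g1) (hxx : b11 x x = 0) :
    Module.finrank ℂ (LinearMap.range (b11 x)) =
      Module.finrank ℂ (LinearMap.range (b01.flip x)) :=
  sdim_bracket_with_x_eq_zero_general g0 g1 b11 b01 B0 B1 hB0 hB1 hinv2 x
end

section
/- Let g = gl(m|n) with m ≠ n (or sl(m|n)), with the natural ℤ-grading g = g(-1) ⊕ g(0) ⊕ g(1) where g(1) consists of block-upper-triangular odd matrices (m×n blocks) and g(-1) of block-lower-triangular odd matrices. Identify an odd element x ∈ g₁ with a pair (x⁺, x⁻) where x⁺ : ℂⁿ → ℂᵐ and x⁻ : ℂᵐ → ℂⁿ. Then [x,x] = 0 if and only if x⁺x⁻ = 0 and x⁻x⁺ = 0. Moreover, two such self-commuting elements x, y lie in the same orbit of G₀ = GL(m) × GL(n) (acting by conjugation) if and only if rank(x⁺) = rank(y⁺) and rank(x⁻) = rank(y⁻). -/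
/-
An odd element squares to the block-diagonal matrix `diag (x⁺ x⁻, x⁻ x⁺)`, which gives the
first part. For the orbits, read `x⁺ : V → W` and `x⁻ : W → V` as linear maps with
`x⁺ x⁻ = 0 = x⁻ x⁺`. With complements `A` of `ker x⁺` and `E` of `ker x⁻`, the maps restrict to
isomorphisms `A ≃ im x⁺` and `E ≃ im x⁻`, and since `im x⁻ ≤ ker x⁺`, `im x⁺ ≤ ker x⁻` we get
splittings `V = A ⊕ im x⁻ ⊕ B` and `W = E ⊕ im x⁺ ⊕ C` with `x⁺ B = 0 = x⁻ C`. In bases adapted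
to them the pair has a normal form that depends only on the two ranks and the dimensions, so
pairs with equal ranks are conjugate under `GL(V) × GL(W)`.
-/

open Module Submodule

def IsBasisOf (K : Type*) {V ι : Type*} [Semiring K] [AddCommMonoid V] [Module K V] (u : ι → V)
    (p : Submodule K V) : Prop :=
  LinearIndependent K u ∧ span K (Set.range u) = p

namespace IsBasisOf

variable {K V W ι κ : Type*} [Ring K] [AddCommGroup V] [Module K V] [AddCommGroup W] [Module K W]
  {u : ι → V} {u' : κ → V} {p q : Submodule K V}

theorem mem (hu : IsBasisOf K u p) (i : ι) : u i ∈ p :=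
  hu.2 ▸ subset_span ⟨i, rfl⟩

theorem sum_elim (hu : IsBasisOf K u p) (hu' : IsBasisOf K u' q) (h : Disjoint p q) :
    IsBasisOf K (Sum.elim u u') (p ⊔ q) :=
  ⟨hu.1.sum_type hu'.1 (by rwa [hu.2, hu'.2]),
    by rw [Set.Sum.elim_range, span_union, hu.2, hu'.2]⟩

theorem map_of_isCompl_ker (hu : IsBasisOf K u p) {f : V →ₗ[K] W} (h : IsCompl p f.ker) :
    IsBasisOf K (f ∘ u) f.range :=
  ⟨hu.1.map (hu.2 ▸ h.disjoint),
    by rw [Set.range_comp, ← Submodule.map_span, hu.2, map_eq_range_iff.2 h.codisjoint]⟩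

noncomputable def basis (hu : IsBasisOf K u ⊤) : Basis ι K V :=
  .mk hu.1 hu.2.ge

@[simp]
theorem coe_basis (hu : IsBasisOf K u ⊤) : ⇑hu.basis = u :=
  Basis.coe_mk _ _

end IsBasisOf

section NormalForm

variable {K V W : Type*} [Field K] [AddCommGroup V] [Module K V] [AddCommGroup W] [Module K W]

theorem exists_isBasisOf_fin [FiniteDimensional K V] (p : Submodule K V) {d : ℕ}
    (hd : finrank K p = d) : ∃ u : Fin d → V, IsBasisOf K u p := by
  let b := finBasisOfFinrankEq K p hd
  refine ⟨p.subtype ∘ b, b.linearIndependent.map' _ p.ker_subtype, ?_⟩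
  rw [Set.range_comp, ← Submodule.map_span, b.span_eq, Submodule.map_top, range_subtype]

theorem exists_isBasisOf_top_sum_elim [FiniteDimensional K V] {φ : V →ₗ[K] W}
    {D R : Submodule K V} (hD : IsCompl D φ.ker) (hR : R ≤ φ.ker)
    {ι μ : Type*} {d : ι → V} {u : μ → V} (hd : IsBasisOf K d D) (hu : IsBasisOf K u R) :
    ∃ (k : ℕ) (b : Fin k → V), IsBasisOf K (Sum.elim d (Sum.elim u b)) ⊤ ∧ ∀ j, φ (b j) = 0 := by
  obtain ⟨B, hRB, hRB_eq⟩ := IsModularLattice.exists_disjoint_and_sup_eq hR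
  obtain ⟨b, hb⟩ := exists_isBasisOf_fin B rfl
  refine ⟨_, b, ?_, fun j ↦ hRB_eq.le (mem_sup_right (hb.mem j))⟩
  have hker : IsBasisOf K (Sum.elim u b) φ.ker := hRB_eq ▸ hu.sum_elim hb hRB
  simpa [hD.sup_eq_top] using hd.sum_elim hker hD.disjoint

/-- The index types are arranged so that a single pair of bases puts both maps of a pair
`f : V → W`, `g : W → V` with `f ∘ g = 0 = g ∘ f` into normal form:
`IsNormalFormIn f v w ∧ IsNormalFormIn g w v`. -/
def IsNormalFormIn {ι κ μ ν : Type*} (f : V →ₗ[K] W) (v : Basis (ι ⊕ μ ⊕ κ) K V)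
    (w : Basis (μ ⊕ ι ⊕ ν) K W) : Prop :=
  (∀ i, f (v (.inl i)) = w (.inr (.inl i))) ∧ ∀ j, f (v (.inr j)) = 0

theorem IsNormalFormIn.comp_basis_equiv {ι κ μ ν : Type*} {f f' : V →ₗ[K] W}
    {v v' : Basis (ι ⊕ μ ⊕ κ) K V} {w w' : Basis (μ ⊕ ι ⊕ ν) K W}
    (hf : IsNormalFormIn f v w) (hf' : IsNormalFormIn f' v' w') :
    f' ∘ₗ (v.equiv v' (.refl _)).toLinearMap = (w.equiv w' (.refl _)).toLinearMap ∘ₗ f := by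
  refine v.ext fun j ↦ ?_
  rcases j with i | j
  · simp [Basis.equiv_apply, hf.1, hf'.1]
  · simp [Basis.equiv_apply, hf.2, hf'.2]

theorem finrank_range_eq_of_comp_linearEquiv_eq {f f' : V →ₗ[K] W} (P : V ≃ₗ[K] V)
    (Q : W ≃ₗ[K] W) (h : f' ∘ₗ P.toLinearMap = Q.toLinearMap ∘ₗ f) :
    finrank K f.range = finrank K f'.range := by
  have hrange : f'.range = f.range.map Q.toLinearMap := by
    rw [← LinearMap.range_comp, ← h, LinearMap.range_comp_of_range_eq_top _ P.range]
  rw [hrange, LinearEquiv.finrank_map_eq]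

variable [FiniteDimensional K V] [FiniteDimensional K W]

theorem exists_isNormalFormIn_of_comp_eq_zero {f : V →ₗ[K] W} {g : W →ₗ[K] V}
    (hfg : f ∘ₗ g = 0) (hgf : g ∘ₗ f = 0) {r s : ℕ}
    (hr : finrank K f.range = r) (hs : finrank K g.range = s) :
    ∃ (b c : ℕ) (v : Basis (Fin r ⊕ Fin s ⊕ Fin b) K V) (w : Basis (Fin s ⊕ Fin r ⊕ Fin c) K W),
      IsNormalFormIn f v w ∧ IsNormalFormIn g w v := by
  obtain ⟨A, hA⟩ := f.ker.exists_isCompl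
  obtain ⟨E, hE⟩ := g.ker.exists_isCompl
  obtain ⟨a, ha⟩ := exists_isBasisOf_fin A
    (hr ▸ (f.kerComplementEquivRange hA.symm).finrank_eq)
  obtain ⟨e, he⟩ := exists_isBasisOf_fin E
    (hs ▸ (g.kerComplementEquivRange hE.symm).finrank_eq)
  obtain ⟨b, vb, hv, hvb⟩ := exists_isBasisOf_top_sum_elim hA.symm
    (LinearMap.range_le_ker_iff.2 hfg) ha (he.map_of_isCompl_ker hE.symm)
  obtain ⟨c, wc, hw, hwc⟩ := exists_isBasisOf_top_sum_elim hE.symm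
    (LinearMap.range_le_ker_iff.2 hgf) he (ha.map_of_isCompl_ker hA.symm)
  refine ⟨b, c, hv.basis, hw.basis, ⟨fun i ↦ by simp, ?_⟩, ⟨fun i ↦ by simp, ?_⟩⟩
  · rintro (k | j)
    · simpa using LinearMap.congr_fun hfg (e k)
    · simpa using hvb j
  · rintro (i | j)
    · simpa using LinearMap.congr_fun hgf (a i)
    · simpa using hwc j

theorem exists_linearEquiv_conj_iff_finrank_range_eq {f f' : V →ₗ[K] W} {g g' : W →ₗ[K] V}
    (hfg : f ∘ₗ g = 0) (hgf : g ∘ₗ f = 0) (hfg' : f' ∘ₗ g' = 0) (hgf' : g' ∘ₗ f' = 0) :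
    (∃ (Q : W ≃ₗ[K] W) (P : V ≃ₗ[K] V),
        f' ∘ₗ P.toLinearMap = Q.toLinearMap ∘ₗ f ∧ g' ∘ₗ Q.toLinearMap = P.toLinearMap ∘ₗ g) ↔
      finrank K f.range = finrank K f'.range ∧ finrank K g.range = finrank K g'.range := by
  constructor
  · rintro ⟨Q, P, hf, hg⟩
    exact ⟨finrank_range_eq_of_comp_linearEquiv_eq P Q hf,
      finrank_range_eq_of_comp_linearEquiv_eq Q P hg⟩
  rintro ⟨hr, hs⟩
  obtain ⟨b, c, v, w, hfvw, hgwv⟩ := exists_isNormalFormIn_of_comp_eq_zero hfg hgf rfl rfl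
  obtain ⟨b', c', v', w', hfvw', hgwv'⟩ :=
    exists_isNormalFormIn_of_comp_eq_zero hfg' hgf' hr.symm hs.symm
  obtain rfl : b = b' := by
    simpa using (finrank_eq_card_basis v).symm.trans (finrank_eq_card_basis v')
  obtain rfl : c = c' := by
    simpa using (finrank_eq_card_basis w).symm.trans (finrank_eq_card_basis w')
  exact ⟨w.equiv w' (.refl _), v.equiv v' (.refl _), hfvw.comp_basis_equiv hfvw',
    hgwv.comp_basis_equiv hgwv'⟩

end NormalForm

namespace Matrix

theorem fromBlocks_zero_mul_self {R m n : Type*} [NonUnitalNonAssocSemiring R] [Fintype m]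
    [Fintype n] (xp : Matrix m n R) (xm : Matrix n m R) :
    fromBlocks 0 xp xm 0 * fromBlocks 0 xp xm 0 = fromBlocks (xp * xm) 0 0 (xm * xp) := by
  simp [fromBlocks_multiply]

theorem fromBlocks_zero_mul_self_add_self_eq_zero_iff {K m n : Type*} [Field K] [NeZero (2 : K)]
    [Fintype m] [Fintype n] (xp : Matrix m n K) (xm : Matrix n m K) :
    fromBlocks 0 xp xm 0 * fromBlocks 0 xp xm 0 + fromBlocks 0 xp xm 0 * fromBlocks 0 xp xm 0 = 0 ↔
      xp * xm = 0 ∧ xm * xp = 0 := by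
  rw [← two_smul K, smul_eq_zero, or_iff_right two_ne_zero, fromBlocks_zero_mul_self,
    ← fromBlocks_zero, fromBlocks_inj]
  simp

theorem mulVecLin_comp_eq_zero_of_mul_eq_zero {R l m n : Type*} [CommSemiring R] [Fintype m]
    [Fintype n] {x : Matrix l m R} {y : Matrix m n R} (h : x * y = 0) :
    x.mulVecLin ∘ₗ y.mulVecLin = 0 := by
  rw [← mulVecLin_mul, h, mulVecLin_zero]

theorem eq_mul_units_inv_iff_mul_eq {R m n : Type*} [Semiring R] [Fintype n] [DecidableEq n]
    (x y : Matrix m n R) (h : (Matrix n n R)ˣ) :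
    y = x * ((h⁻¹ : (Matrix n n R)ˣ) : Matrix n n R) ↔ y * (h : Matrix n n R) = x := by
  constructor
  · rintro rfl
    rw [Matrix.mul_assoc, Units.inv_mul, Matrix.mul_one]
  · rintro rfl
    rw [Matrix.mul_assoc, Units.mul_inv, Matrix.mul_one]

section UnitsAction

variable {R m n : Type*} [CommRing R] [Fintype m] [Fintype n] [DecidableEq m] [DecidableEq n]

noncomputable def unitsEquivLinearEquiv : (Matrix n n R)ˣ ≃* ((n → R) ≃ₗ[R] (n → R)) :=
  GeneralLinearGroup.toLin.trans (LinearMap.GeneralLinearGroup.generalLinearEquiv R (n → R))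

@[simp]
theorem coe_unitsEquivLinearEquiv (g : (Matrix n n R)ˣ) :
    (unitsEquivLinearEquiv g).toLinearMap = (g : Matrix n n R).mulVecLin := by
  simp [unitsEquivLinearEquiv]

theorem eq_units_mul_mul_inv_iff (x y : Matrix m n R) (g : (Matrix m m R)ˣ)
    (h : (Matrix n n R)ˣ) :
    y = (g : Matrix m m R) * x * ((h⁻¹ : (Matrix n n R)ˣ) : Matrix n n R) ↔
      y.mulVecLin ∘ₗ (unitsEquivLinearEquiv h).toLinearMap =
        (unitsEquivLinearEquiv g).toLinearMap ∘ₗ x.mulVecLin := by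
  rw [eq_mul_units_inv_iff_mul_eq, coe_unitsEquivLinearEquiv, coe_unitsEquivLinearEquiv,
    ← mulVecLin_mul, ← mulVecLin_mul, ← toLin'_apply', ← toLin'_apply', toLin'.injective.eq_iff]

theorem exists_units_conj_iff_exists_linearEquiv_conj (xp yp : Matrix m n R)
    (xm ym : Matrix n m R) :
    (∃ (g : (Matrix m m R)ˣ) (h : (Matrix n n R)ˣ),
        yp = (g : Matrix m m R) * xp * ((h⁻¹ : (Matrix n n R)ˣ) : Matrix n n R) ∧
          ym = (h : Matrix n n R) * xm * ((g⁻¹ : (Matrix m m R)ˣ) : Matrix m m R)) ↔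
      ∃ (Q : (m → R) ≃ₗ[R] (m → R)) (P : (n → R) ≃ₗ[R] (n → R)),
        yp.mulVecLin ∘ₗ P.toLinearMap = Q.toLinearMap ∘ₗ xp.mulVecLin ∧
          ym.mulVecLin ∘ₗ Q.toLinearMap = P.toLinearMap ∘ₗ xm.mulVecLin := by
  simp only [eq_units_mul_mul_inv_iff]
  constructor
  · rintro ⟨g, h, hp, hm⟩
    exact ⟨_, _, hp, hm⟩
  · rintro ⟨Q, P, hp, hm⟩
    exact ⟨unitsEquivLinearEquiv.symm Q, unitsEquivLinearEquiv.symm P, by simpa, by simpa⟩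

end UnitsAction

theorem exists_units_conj_iff_rank_eq {K m n : Type*} [Field K] [Fintype m] [Fintype n]
    [DecidableEq m] [DecidableEq n] {xp yp : Matrix m n K} {xm ym : Matrix n m K}
    (hx₁ : xp * xm = 0) (hx₂ : xm * xp = 0) (hy₁ : yp * ym = 0) (hy₂ : ym * yp = 0) :
    (∃ (g : (Matrix m m K)ˣ) (h : (Matrix n n K)ˣ),
        yp = (g : Matrix m m K) * xp * ((h⁻¹ : (Matrix n n K)ˣ) : Matrix n n K) ∧
          ym = (h : Matrix n n K) * xm * ((g⁻¹ : (Matrix m m K)ˣ) : Matrix m m K)) ↔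
      xp.rank = yp.rank ∧ xm.rank = ym.rank := by
  rw [exists_units_conj_iff_exists_linearEquiv_conj]
  exact exists_linearEquiv_conj_iff_finrank_range_eq
    (mulVecLin_comp_eq_zero_of_mul_eq_zero hx₁) (mulVecLin_comp_eq_zero_of_mul_eq_zero hx₂)
    (mulVecLin_comp_eq_zero_of_mul_eq_zero hy₁) (mulVecLin_comp_eq_zero_of_mul_eq_zero hy₂)

end Matrix

/-- In `gl(m|n)`, identify an odd element `x` with the block matrix
`[[0, x⁺],[x⁻, 0]]` where `x⁺ : ℂⁿ → ℂᵐ` and `x⁻ : ℂᵐ → ℂⁿ`.  Then `[x,x] = 0`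
(the anticommutator `x·x + x·x` vanishes) iff `x⁺x⁻ = 0` and `x⁻x⁺ = 0`; and two
self-commuting odd elements `x`, `y` lie in the same orbit of `G₀ = GL(m) × GL(n)`
(acting by `(g,h)·(x⁺,x⁻) = (g x⁺ h⁻¹, h x⁻ g⁻¹)`) iff `rank x⁺ = rank y⁺` and
`rank x⁻ = rank y⁻`. -/
theorem gl_mn_selfcommuting_and_orbits (m n : ℕ)
    (xp yp : Matrix (Fin m) (Fin n) ℂ) (xm ym : Matrix (Fin n) (Fin m) ℂ) :
    ((Matrix.fromBlocks (0 : Matrix (Fin m) (Fin m) ℂ) xp xm 0) *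
        (Matrix.fromBlocks (0 : Matrix (Fin m) (Fin m) ℂ) xp xm 0) +
      (Matrix.fromBlocks (0 : Matrix (Fin m) (Fin m) ℂ) xp xm 0) *
        (Matrix.fromBlocks (0 : Matrix (Fin m) (Fin m) ℂ) xp xm 0) = 0 ↔
      xp * xm = 0 ∧ xm * xp = 0) ∧
    ((xp * xm = 0 ∧ xm * xp = 0) → (yp * ym = 0 ∧ ym * yp = 0) →
      ((∃ (g : (Matrix (Fin m) (Fin m) ℂ)ˣ) (h : (Matrix (Fin n) (Fin n) ℂ)ˣ),
          yp = (g : Matrix (Fin m) (Fin m) ℂ) * xp * ((h⁻¹ : _) : Matrix (Fin n) (Fin n) ℂ) ∧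
          ym = (h : Matrix (Fin n) (Fin n) ℂ) * xm * ((g⁻¹ : _) : Matrix (Fin m) (Fin m) ℂ)) ↔
        (xp.rank = yp.rank ∧ xm.rank = ym.rank))) :=
  ⟨Matrix.fromBlocks_zero_mul_self_add_self_eq_zero_iff xp xm, fun hx hy ↦
    Matrix.exists_units_conj_iff_rank_eq hx.1 hx.2 hy.1 hy.2⟩
end

section
/- With g = gl(m|n) and X = {x ∈ g₁ : [x,x] = 0} identified with pairs (x⁺ : ℂⁿ→ℂᵐ, x⁻ : ℂᵐ→ℂⁿ) with x⁺x⁻ = 0 = x⁻x⁺, the set X is the union of finitely many GL(m)×GL(n)-orbits, indexed by pairs (p,q) with p + q ≤ min(m,n), where p = rank x⁺ and q = rank x⁻. -/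
/-!
Since `x⁻x⁺ = 0`, the image of `x⁺` lies in `ker x⁻`, so rank-nullity bounds `rank x⁺ + rank x⁻` by
`m`; symmetrically by `n`. For the orbits, take a basis of `ℂᵐ` made of a basis of `im x⁺`, a
completion of it to a basis of `ker x⁻`, and preimages under `x⁻` of a basis of `im x⁻`; build the
basis of `ℂⁿ` the same way with the roles of `x⁺` and `x⁻` exchanged, reusing the same bases of
`im x⁺` and `im x⁻`. In these bases both maps are partial identities between blocks whose sizes
depend only on the two ranks, so two pairs with the same ranks are conjugate.
-/

open Module Matrix

theorem LinearIndependent.sum_elim_of_mem_ker {R M N ι κ : Type*} [Ring R] [AddCommGroup M]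
    [Module R M] [AddCommGroup N] [Module R N] {φ : M →ₗ[R] N} {v : ι → M} {w : κ → M}
    (hv : LinearIndependent R v) (hvφ : ∀ i, v i ∈ LinearMap.ker φ)
    (hw : LinearIndependent R (φ ∘ w)) :
    LinearIndependent R (Sum.elim v w) :=
  hv.sum_type (.of_comp φ hw) <| (Submodule.range_ker_disjoint hw).symm.mono_left <|
    Submodule.span_le.mpr <| Set.range_subset_iff.mpr hvφ

variable {K V W : Type*} [Field K] [AddCommGroup V] [Module K V] [AddCommGroup W] [Module K W]

namespace LinearMap

-- For a pair `(f, g)`: `ι` indexes `im f`, `ι ⊕ σ` indexes `ker g`, `κ` indexes lifts of `im g`.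
def ShiftsBlocks {ι κ σ τ : Type*} (g : V →ₗ[K] W) (bV : Basis ((ι ⊕ σ) ⊕ κ) K V)
    (bW : Basis ((κ ⊕ τ) ⊕ ι) K W) : Prop :=
  (∀ a, g (bV (.inl a)) = 0) ∧ ∀ j, g (bV (.inr j)) = bW (.inl (.inl j))

theorem ShiftsBlocks.eq_conj {ι κ σ τ : Type*} {g g' : V →ₗ[K] W}
    {bV bV' : Basis ((ι ⊕ σ) ⊕ κ) K V} {bW bW' : Basis ((κ ⊕ τ) ⊕ ι) K W}
    (h : g.ShiftsBlocks bV bW) (h' : g'.ShiftsBlocks bV' bW') :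
    g' = (bW.equiv bW' (.refl _) : W →ₗ[K] W) ∘ₗ g ∘ₗ (bV.equiv bV' (.refl _)).symm := by
  refine bV'.ext fun x => ?_
  rcases x with a | j
  · simp [Basis.equiv_symm, h.1, h'.1]
  · simp [Basis.equiv_symm, h.2, h'.2]

theorem finrank_range_add_finrank_range_le [FiniteDimensional K V] {f : W →ₗ[K] V}
    {g : V →ₗ[K] W} (hgf : g ∘ₗ f = 0) :
    finrank K (range f) + finrank K (range g) ≤ finrank K V := by
  rw [← g.finrank_range_add_finrank_ker, add_comm]
  exact Nat.add_le_add_left (Submodule.finrank_mono (range_le_ker_iff.mpr hgf)) _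

theorem exists_basis_extending_of_le_ker [FiniteDimensional K V] {ι κ : Type*} [Fintype ι]
    [Fintype κ] (g : V →ₗ[K] W) {R : Submodule K V} (hR : R ≤ ker g) (bR : Basis ι K R)
    (bS : Basis κ K (range g)) {r : ℕ}
    (hr : finrank K R + r + finrank K (range g) = finrank K V) :
    ∃ b : Basis ((ι ⊕ Fin r) ⊕ κ) K V, (∀ i, b (.inl (.inl i)) = bR i) ∧
      (∀ a, g (b (.inl a)) = 0) ∧ ∀ j, g (b (.inr j)) = bS j := by
  set R' := R.comap (ker g).subtype
  have hQ : finrank K ((ker g) ⧸ R') = r := by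
    have := R'.finrank_quotient_add_finrank
    have := g.finrank_range_add_finrank_ker
    rw [(Submodule.comapSubtypeEquivOfLe hR).finrank_eq] at *
    omega
  let bQ := finBasisOfFinrankEq K _ hQ
  let c := Function.surjInv R'.mkQ_surjective ∘ bQ
  let u := Function.surjInv g.surjective_rangeRestrict ∘ bS
  have hu : ∀ j, g (u j) = bS j := fun j =>
    congrArg Subtype.val (Function.surjInv_eq g.surjective_rangeRestrict (bS j))
  let bR' : ι → ker g := fun i => ⟨bR i, hR (bR i).2⟩
  have hker : LinearIndependent K (Sum.elim bR' c) := by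
    refine .sum_elim_of_mem_ker (φ := R'.mkQ) (.of_comp (ker g).subtype ?_) (fun i => ?_) ?_
    · exact bR.linearIndependent.map' R.subtype R.ker_subtype
    · simp [R', bR']
    · simpa [c, Function.comp_def, Function.surjInv_eq] using bQ.linearIndependent
  have hli : LinearIndependent K (Sum.elim ((ker g).subtype ∘ Sum.elim bR' c) u) := by
    refine .sum_elim_of_mem_ker (φ := g) (hker.map' _ (ker g).ker_subtype) (fun a => ?_) ?_
    · exact ((Sum.elim bR' c) a).2
    · have := bS.linearIndependent.map' (range g).subtype (range g).ker_subtype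
      convert this using 1
      ext j
      simp [hu]
  refine ⟨basisOfLinearIndependentOfCardEqFinrank' _ hli (by
    simp only [Fintype.card_sum, Fintype.card_fin, ← finrank_eq_card_basis bR,
      ← finrank_eq_card_basis bS]; omega), ?_, ?_, ?_⟩
  · simp [bR']
  · intro a; simp
  · intro j; simp [hu]

theorem exists_bases_shiftsBlocks [FiniteDimensional K V] [FiniteDimensional K W]
    {f : W →ₗ[K] V} {g : V →ₗ[K] W} (hgf : g ∘ₗ f = 0) (hfg : f ∘ₗ g = 0) {p q rV rW : ℕ}
    (hp : finrank K (range f) = p) (hq : finrank K (range g) = q)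
    (hV : p + rV + q = finrank K V) (hW : q + rW + p = finrank K W) :
    ∃ (bV : Basis ((Fin p ⊕ Fin rV) ⊕ Fin q) K V) (bW : Basis ((Fin q ⊕ Fin rW) ⊕ Fin p) K W),
      g.ShiftsBlocks bV bW ∧ f.ShiftsBlocks bW bV := by
  let bF := finBasisOfFinrankEq K _ hp
  let bG := finBasisOfFinrankEq K _ hq
  obtain ⟨bV, hbV, hgV, hgV'⟩ :=
    g.exists_basis_extending_of_le_ker (range_le_ker_iff.mpr hgf) bF bG (hp ▸ hq ▸ hV)
  obtain ⟨bW, hbW, hfW, hfW'⟩ :=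
    f.exists_basis_extending_of_le_ker (range_le_ker_iff.mpr hfg) bG bF (hp ▸ hq ▸ hW)
  exact ⟨bV, bW, ⟨hgV, fun j => by rw [hgV', hbW]⟩, ⟨hfW, fun i => by rw [hfW', hbV]⟩⟩

theorem exists_conj_of_finrank_range_eq [FiniteDimensional K V] [FiniteDimensional K W]
    {f f' : W →ₗ[K] V} {g g' : V →ₗ[K] W} (hgf : g ∘ₗ f = 0) (hfg : f ∘ₗ g = 0)
    (hgf' : g' ∘ₗ f' = 0) (hfg' : f' ∘ₗ g' = 0)
    (hp : finrank K (range f) = finrank K (range f'))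
    (hq : finrank K (range g) = finrank K (range g')) :
    ∃ (α : V ≃ₗ[K] V) (β : W ≃ₗ[K] W),
      f' = (α : V →ₗ[K] V) ∘ₗ f ∘ₗ β.symm ∧ g' = (β : W →ₗ[K] W) ∘ₗ g ∘ₗ α.symm := by
  have hV := finrank_range_add_finrank_range_le hgf
  have hW := finrank_range_add_finrank_range_le hfg
  obtain ⟨bV, bW, hg, hf⟩ := exists_bases_shiftsBlocks hgf hfg rfl rfl
    (rV := finrank K V - (finrank K (range f) + finrank K (range g)))
    (rW := finrank K W - (finrank K (range f) + finrank K (range g))) (by omega) (by omega)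
  obtain ⟨bV', bW', hg', hf'⟩ := exists_bases_shiftsBlocks hgf' hfg' hp.symm hq.symm
    (rV := finrank K V - (finrank K (range f) + finrank K (range g)))
    (rW := finrank K W - (finrank K (range f) + finrank K (range g))) (by omega) (by omega)
  exact ⟨bV.equiv bV' (.refl _), bW.equiv bW' (.refl _), hf.eq_conj hf', hg.eq_conj hg'⟩

end LinearMap

namespace Matrix

variable {R : Type*} [CommRing R] {m n : Type*} [Fintype m] [Fintype n] [DecidableEq m]
  [DecidableEq n]

theorem rank_units_mul_mul_units (g : (Matrix m m R)ˣ) (A : Matrix m n R)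
    (h : (Matrix n n R)ˣ) : ((g : Matrix m m R) * A * (h : Matrix n n R)).rank = A.rank := by
  rw [rank_mul_eq_left_of_isUnit_det _ _ ((isUnit_iff_isUnit_det _).mp h.isUnit),
    rank_mul_eq_right_of_isUnit_det _ _ ((isUnit_iff_isUnit_det _).mp g.isUnit)]

theorem toLin'_comp_eq_zero {l : Type*} {A : Matrix l m R} {B : Matrix m n R} (hAB : A * B = 0) :
    toLin' A ∘ₗ toLin' B = 0 := by
  rw [← toLin'_mul, hAB, map_zero]

theorem exists_units_toLin'_eq (α : (n → R) ≃ₗ[R] (n → R)) :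
    ∃ u : (Matrix n n R)ˣ, toLin' (u : Matrix n n R) = α ∧
      toLin' ((u⁻¹ : (Matrix n n R)ˣ) : Matrix n n R) = α.symm :=
  ⟨⟨LinearMap.toMatrix' α, LinearMap.toMatrix' α.symm,
    by simp [← LinearMap.toMatrix'_comp], by simp [← LinearMap.toMatrix'_comp]⟩,
    toLin'_toMatrix' _, toLin'_toMatrix' _⟩

end Matrix

/-- For `g = gl(m|n)`, the cone `X = {x ∈ g₁ : [x,x] = 0}`, identified with
pairs `(x⁺, x⁻)` with `x⁺x⁻ = 0 = x⁻x⁺`, is a finite union of `GL(m) × GL(n)`-orbits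
indexed by the pairs `(p,q) = (rank x⁺, rank x⁻)` with `p + q ≤ min m n`: every `x ∈ X`
satisfies `rank x⁺ + rank x⁻ ≤ min m n`, and two elements of `X` lie in the same orbit
iff they have the same pair of ranks. -/
theorem gl_mn_cone_orbits_indexed_by_ranks (m n : ℕ)
    (xp : Matrix (Fin m) (Fin n) ℂ) (xm : Matrix (Fin n) (Fin m) ℂ)
    (hx1 : xp * xm = 0) (hx2 : xm * xp = 0) :
    xp.rank + xm.rank ≤ min m n ∧
    ∀ (yp : Matrix (Fin m) (Fin n) ℂ) (ym : Matrix (Fin n) (Fin m) ℂ),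
      yp * ym = 0 → ym * yp = 0 →
      ((∃ (g : (Matrix (Fin m) (Fin m) ℂ)ˣ) (h : (Matrix (Fin n) (Fin n) ℂ)ˣ),
          yp = (g : Matrix (Fin m) (Fin m) ℂ) * xp * ((h⁻¹ : _) : Matrix (Fin n) (Fin n) ℂ) ∧
          ym = (h : Matrix (Fin n) (Fin n) ℂ) * xm * ((g⁻¹ : _) : Matrix (Fin m) (Fin m) ℂ)) ↔
        (xp.rank = yp.rank ∧ xm.rank = ym.rank)) := by
  have hn := rank_add_rank_le_card_of_mul_eq_zero hx1
  have hm := rank_add_rank_le_card_of_mul_eq_zero hx2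
  simp only [Fintype.card_fin] at hn hm
  refine ⟨by omega, fun yp ym hy1 hy2 => ⟨?_, fun ⟨hp, hq⟩ => ?_⟩⟩
  · rintro ⟨g, h, rfl, rfl⟩
    exact ⟨(rank_units_mul_mul_units _ _ _).symm, (rank_units_mul_mul_units _ _ _).symm⟩
  · obtain ⟨α, β, hf, hg⟩ := LinearMap.exists_conj_of_finrank_range_eq
      (toLin'_comp_eq_zero hx2) (toLin'_comp_eq_zero hx1) (toLin'_comp_eq_zero hy2)
      (toLin'_comp_eq_zero hy1) hp hq
    obtain ⟨g, hg₁, hg₂⟩ := exists_units_toLin'_eq α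
    obtain ⟨h, hh₁, hh₂⟩ := exists_units_toLin'_eq β
    refine ⟨g, h, toLin'.injective ?_, toLin'.injective ?_⟩
    · rwa [toLin'_mul, toLin'_mul, hg₁, hh₂, LinearMap.comp_assoc]
    · rwa [toLin'_mul, toLin'_mul, hh₁, hg₂, LinearMap.comp_assoc]
end
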